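/- Let E = (E^0, E^1, s, r) be a directed graph, let x ∈ ∂E be a path that is not rational, let K be a field and let a = (a_e) ∈ (K^*)^{E^1}. Suppose y ∈ ∂E is tail-equivalent to x and that μ_1, μ_2, ν_1, ν_2 ∈ F(E) and p_1, p_2 ∈ ∂E satisfy y = μ_1 p_1 = μ_2 p_2 and x = ν_1 p_1 = ν_2 p_2. Then a_{μ_1} a_{ν_1}^{-1} = a_{μ_2} a_{ν_2}^{-1} in K^* and |μ_1| − |ν_1| = |μ_2| − |ν_2|. -/

import Mathlib

open scoped Classical

/-- A directed graph: vertices, edges, source and range maps. -/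
structure DirGraph : Type 1 where
  V : Type
  E : Type
  s : E → V
  r : E → V

namespace DirGraph

variable (G : DirGraph)

/-- A finite path: a source vertex together with a compatible list of edges
(the empty list gives the path of length 0 at `src`). -/
structure FinPath where
  src : G.V
  edges : List G.E
  src_eq : ∀ e ∈ edges.head?, G.s e = src
  chain : edges.Chain' (fun e f => G.r e = G.s f)

variable {G}

/-- The range of a finite path. -/
def FinPath.rng (μ : G.FinPath) : G.V :=
  ((μ.edges.getLast?).map G.r).getD μ.src

/-- The length of a finite path. -/
def FinPath.length (μ : G.FinPath) : ℕ := μ.edges.length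

variable (G)

/-- An infinite path. -/
structure InfPath where
  edges : ℕ → G.E
  chain : ∀ n, G.r (edges n) = G.s (edges (n + 1))

/-- The source of an infinite path. -/
def InfPath.src {G : DirGraph} (p : G.InfPath) : G.V := G.s (p.edges 0)

def IsSink (v : G.V) : Prop := ∀ e, G.s e ≠ v

def IsInfEmitter (v : G.V) : Prop := {e | G.s e = v}.Infinite

def IsSingular (v : G.V) : Prop := IsSink G v ∨ IsInfEmitter G v

/-- Boundary paths: infinite paths, together with finite paths ending in a singular vertex. -/
def BPath : Type := {x : G.FinPath ⊕ G.InfPath // ∀ μ, x = Sum.inl μ → IsSingular G μ.rng}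

variable {G}

/-- The source of a boundary path. -/
def BPath.src (x : G.BPath) : G.V :=
  match x.1 with
  | Sum.inl μ => μ.src
  | Sum.inr p => p.src

def BPath.IsInfinite (x : G.BPath) : Prop := ∃ p, x.1 = Sum.inr p

/-- `IsCat μ p x` means `x = μ p`, i.e. `x` is the concatenation of the finite path `μ`
with the boundary path `p` (in particular `r(μ) = s(p)`). -/
def IsCat (μ : G.FinPath) (p x : G.BPath) : Prop :=
  μ.rng = p.src ∧
  match p.1, x.1 with
  | Sum.inl q, Sum.inl ξ => ξ.src = μ.src ∧ ξ.edges = μ.edges ++ q.edges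
  | Sum.inr q, Sum.inr ξ =>
      (∀ (i : ℕ) (h : i < μ.edges.length), ξ.edges i = μ.edges.get ⟨i, h⟩) ∧
      (∀ i : ℕ, ξ.edges (μ.edges.length + i) = q.edges i)
  | _, _ => False

/-- `x ∼_k y` : tail equivalence with lag `k`. -/
def TailEqLag (x y : G.BPath) (k : ℤ) : Prop :=
  ∃ (μ ν : G.FinPath) (p : G.BPath),
    IsCat μ p x ∧ IsCat ν p y ∧ (μ.length : ℤ) - (ν.length : ℤ) = k

/-- Tail equivalence. -/
def TailEq (x y : G.BPath) : Prop := ∃ k, TailEqLag x y k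

/-- The tail-equivalence class (orbit) of a boundary path. -/
def orbit (x : G.BPath) : Set G.BPath := {y | TailEq y x}

/-- A closed path: positive length, same source and range. -/
def FinPath.IsClosed (c : G.FinPath) : Prop := 0 < c.length ∧ c.rng = c.src

/-- A boundary path is rational if it is tail equivalent to `c^∞` for some closed path `c`;
here `c^∞` is characterized as the unique boundary path `p` with `p = c p`. -/
def IsRational (x : G.BPath) : Prop :=
  ∃ (c : G.FinPath) (p : G.BPath), 0 < c.length ∧ IsCat c p p ∧ TailEq x p

/-- A simple closed path: a closed path which is not a proper power of a closed path. -/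
def FinPath.IsSimpleClosed (c : G.FinPath) : Prop :=
  c.IsClosed ∧
    ¬ ∃ (d : G.FinPath) (n : ℕ), 2 ≤ n ∧ d.IsClosed ∧ c.src = d.src ∧
        c.edges = (List.replicate n d.edges).flatten

/-- A cycle: a closed path passing through no vertex twice. -/
def FinPath.IsCycle (c : G.FinPath) : Prop := c.IsClosed ∧ (c.edges.map G.s).Nodup

/-- An exit for a finite path. -/
def FinPath.HasExit (c : G.FinPath) : Prop :=
  ∃ (i : ℕ) (h : i < c.edges.length) (e : G.E),
    G.s e = G.s (c.edges.get ⟨i, h⟩) ∧ e ≠ c.edges.get ⟨i, h⟩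

/-- `c` is a rotation of `d`. -/
def FinPath.IsRotationOf (c d : G.FinPath) : Prop := ∃ i, c.edges = d.edges.rotate i

/-- A maximal cycle: a cycle such that any cycle from which there is a finite path to its
source is a rotation of it. -/
def FinPath.IsMaxCycle (c : G.FinPath) : Prop :=
  c.IsCycle ∧ ∀ d : G.FinPath, d.IsCycle →
    (∃ μ : G.FinPath, μ.src = d.src ∧ μ.rng = c.src) → d.IsRotationOf c

/-- A maximal sink: a sink with no finite path from the source of any cycle to it. -/
def IsMaxSink (G : DirGraph) (v : G.V) : Prop :=
  IsSink G v ∧ ¬ ∃ (d μ : G.FinPath), d.IsCycle ∧ μ.src = d.src ∧ μ.rng = v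

/-- A graph is row-finite if every vertex emits finitely many edges. -/
def RowFinite (G : DirGraph) : Prop := ∀ v : G.V, {e | G.s e = v}.Finite

/-- The set of predecessors of a vertex. -/
def preds (G : DirGraph) (v : G.V) : Set G.V := {w | ∃ μ : G.FinPath, μ.src = w ∧ μ.rng = v}

/-- The finite path of length 0 at a vertex. -/
def vertexPath (G : DirGraph) (v : G.V) : G.FinPath :=
  ⟨v, [], by intro e he; simp at he, List.isChain_nil⟩

/-- A singular vertex, seen as a boundary path. -/
def vertexBPath (G : DirGraph) (v : G.V) (h : IsSingular G v) : G.BPath :=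
  ⟨Sum.inl (vertexPath G v), by
    intro μ hμ
    injection hμ with h2
    subst h2
    exact h⟩

/-- The finite path consisting of a single edge. -/
def singleE (G : DirGraph) (e : G.E) : G.FinPath :=
  ⟨G.s e, [e], by
    intro f hf
    simp only [List.head?_cons, Option.mem_def, Option.some.injEq] at hf
    subst hf
    rfl, List.isChain_singleton e⟩

/-- `a_μ`: the product of the values of `a` along a finite path. -/
def aval {G : DirGraph} {K : Type} [Field K] (a : G.E → K) (μ : G.FinPath) : K :=
  (μ.edges.map a).prod

/-! ## The Leavitt path algebra -/

/-- Generators of the Leavitt path algebra: vertices, edges and ghost edges. -/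
inductive Gen (G : DirGraph) : Type
  | vtx : G.V → Gen G
  | edg : G.E → Gen G
  | ghd : G.E → Gen G

/-- The defining relations of the Leavitt path algebra. -/
inductive LRel (G : DirGraph) (K : Type) [Field K] :
    FreeAlgebra K (Gen G) → FreeAlgebra K (Gen G) → Prop
  | vv_eq (v : G.V) :
      LRel G K (FreeAlgebra.ι K (Gen.vtx v) * FreeAlgebra.ι K (Gen.vtx v))
        (FreeAlgebra.ι K (Gen.vtx v))
  | vv_ne {v w : G.V} (h : v ≠ w) :
      LRel G K (FreeAlgebra.ι K (Gen.vtx v) * FreeAlgebra.ι K (Gen.vtx w)) 0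
  | e1l (e : G.E) :
      LRel G K (FreeAlgebra.ι K (Gen.vtx (G.s e)) * FreeAlgebra.ι K (Gen.edg e))
        (FreeAlgebra.ι K (Gen.edg e))
  | e1r (e : G.E) :
      LRel G K (FreeAlgebra.ι K (Gen.edg e) * FreeAlgebra.ι K (Gen.vtx (G.r e)))
        (FreeAlgebra.ι K (Gen.edg e))
  | e2l (e : G.E) :
      LRel G K (FreeAlgebra.ι K (Gen.vtx (G.r e)) * FreeAlgebra.ι K (Gen.ghd e))
        (FreeAlgebra.ι K (Gen.ghd e))
  | e2r (e : G.E) :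
      LRel G K (FreeAlgebra.ι K (Gen.ghd e) * FreeAlgebra.ι K (Gen.vtx (G.s e)))
        (FreeAlgebra.ι K (Gen.ghd e))
  | ck1_eq (e : G.E) :
      LRel G K (FreeAlgebra.ι K (Gen.ghd e) * FreeAlgebra.ι K (Gen.edg e))
        (FreeAlgebra.ι K (Gen.vtx (G.r e)))
  | ck1_ne {e f : G.E} (h : e ≠ f) :
      LRel G K (FreeAlgebra.ι K (Gen.ghd e) * FreeAlgebra.ι K (Gen.edg f)) 0
  | ck2 (v : G.V) (hfin : {e | G.s e = v}.Finite) (hne : ∃ e, G.s e = v) :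
      LRel G K (FreeAlgebra.ι K (Gen.vtx v))
        (∑ e ∈ hfin.toFinset, FreeAlgebra.ι K (Gen.edg e) * FreeAlgebra.ι K (Gen.ghd e))

/-- The Leavitt path algebra of `G` over `K`. -/
abbrev LPA (G : DirGraph) (K : Type) [Field K] : Type := RingQuot (LRel G K)

/-- The image of a vertex in the Leavitt path algebra. -/
def ofV (G : DirGraph) (K : Type) [Field K] (v : G.V) : LPA G K :=
  RingQuot.mkAlgHom K (LRel G K) (FreeAlgebra.ι K (Gen.vtx v))

/-- The image of an edge in the Leavitt path algebra. -/
def ofE (G : DirGraph) (K : Type) [Field K] (e : G.E) : LPA G K :=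
  RingQuot.mkAlgHom K (LRel G K) (FreeAlgebra.ι K (Gen.edg e))

/-- The image of a ghost edge in the Leavitt path algebra. -/
def ofG (G : DirGraph) (K : Type) [Field K] (e : G.E) : LPA G K :=
  RingQuot.mkAlgHom K (LRel G K) (FreeAlgebra.ι K (Gen.ghd e))

/-- The element `μ` of the Leavitt path algebra associated to a finite path `μ`. -/
def pathElem (G : DirGraph) (K : Type) [Field K] (μ : G.FinPath) : LPA G K :=
  ofV G K μ.src * (μ.edges.map (ofE G K)).prod

/-- The element `μ^*` of the Leavitt path algebra associated to a finite path `μ`. -/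
def pathStarElem (G : DirGraph) (K : Type) [Field K] (μ : G.FinPath) : LPA G K :=
  (μ.edges.reverse.map (ofG G K)).prod * ofV G K μ.src

/-- The degree-`n` homogeneous component of the canonical `ℤ`-grading of the Leavitt
path algebra: the span of the monomials `μ ν^*` with `|μ| - |ν| = n`. -/
def LPAdeg (G : DirGraph) (K : Type) [Field K] (n : ℤ) : Submodule K (LPA G K) :=
  Submodule.span K {x | ∃ μ ν : G.FinPath, μ.rng = ν.rng ∧
    (μ.length : ℤ) - (ν.length : ℤ) = n ∧ x = pathElem G K μ * pathStarElem G K ν}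

/-- `W` is a `ℤ`-grading making `M` a graded module over the canonically graded
Leavitt path algebra. -/
def IsModuleGrading (G : DirGraph) (K : Type) [Field K] (M : Type) [AddCommGroup M]
    [Module K M] [Module (LPA G K) M] (W : ℤ → Submodule K M) : Prop :=
  DirectSum.IsInternal W ∧
    ∀ (m k : ℤ) (a : LPA G K) (y : M), a ∈ LPAdeg G K m → y ∈ W k → a • y ∈ W (m + k)

/-- A set is graded (with respect to a grading `W`) if each of its elements is a finite sum
of homogeneous elements of the set. -/
def GradedCarrier {K M : Type} [Field K] [AddCommGroup M] [Module K M]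
    (W : ℤ → Submodule K M) (S : Set M) : Prop :=
  ∀ m ∈ S, ∃ l : List M, (∀ z ∈ l, z ∈ S ∧ ∃ k, z ∈ W k) ∧ l.sum = m

/-- A graded isomorphism between graded modules over the Leavitt path algebra. -/
def GradedIsoLPA (G : DirGraph) (K : Type) [Field K] (M N : Type)
    [AddCommGroup M] [AddCommGroup N] [Module K M] [Module K N]
    [Module (LPA G K) M] [Module (LPA G K) N]
    (W : ℤ → Submodule K M) (W' : ℤ → Submodule K N) : Prop :=
  ∃ f : M ≃ₗ[LPA G K] N, (∀ k, ∀ m ∈ W k, f m ∈ W' k) ∧ ∀ k, ∀ n ∈ W' k, f.symm n ∈ W k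

/-- A module over the Leavitt path algebra is unital if it is generated by the images of the
vertices. -/
def IsUnitalModule (G : DirGraph) (K : Type) [Field K] (M : Type) [AddCommGroup M]
    [Module (LPA G K) M] : Prop :=
  ∀ m : M, m ∈ Submodule.span (LPA G K) {y : M | ∃ (v : G.V) (m' : M), y = ofV G K v • m'}

/-! ## Chen modules, specified by a basis and the action of the generators -/

/-- A specification of the (twisted) Chen module attached to a boundary path `x`:
an `L_K(E)`-module `M` which is a `K'`-vector space with basis the tail-equivalence class
of `x`, the generators acting by the τ-twisted shift formulas. Here `K ⊆ K'` is a field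
extension and `τ : E¹ → K'` is a family of nonzero scalars. -/
structure ChenSpecT (G : DirGraph) (K K' : Type) [Field K] [Field K'] [Algebra K K']
    (τ : G.E → K') (x : G.BPath) (M : Type) [AddCommGroup M] [Module K' M]
    [Module (LPA G K) M] : Type where
  tau_ne : ∀ e, τ e ≠ 0
  basis : Module.Basis (orbit x) K' M
  act_v : ∀ (v : G.V) (p : orbit x),
    ofV G K v • basis p = if v = BPath.src (p : G.BPath) then basis p else 0
  act_e : ∀ (e : G.E) (p q : orbit x), IsCat (singleE G e) (p : G.BPath) (q : G.BPath) →
    ofE G K e • basis p = τ e • basis q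
  act_e_zero : ∀ (e : G.E) (p : orbit x),
    (¬ ∃ q : G.BPath, IsCat (singleE G e) (p : G.BPath) q) → ofE G K e • basis p = 0
  act_g : ∀ (e : G.E) (p q : orbit x), IsCat (singleE G e) (p : G.BPath) (q : G.BPath) →
    ofG G K e • basis q = (τ e)⁻¹ • basis p
  act_g_zero : ∀ (e : G.E) (q : orbit x),
    (¬ ∃ p : G.BPath, IsCat (singleE G e) p (q : G.BPath)) → ofG G K e • basis q = 0

/-- Specification of the Chen module `V_{[x]}^a` twisted by `a : E¹ → K^*`
(`a = 1` gives `V_{[x]}`). -/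
abbrev ChenSpec (G : DirGraph) (K : Type) [Field K] (a : G.E → K) (x : G.BPath) (M : Type)
    [AddCommGroup M] [Module K M] [Module (LPA G K) M] : Type :=
  ChenSpecT G K K a x M

/-- The canonical grading on a Chen module: the degree-`k` component is spanned by the basis
elements tail-equivalent to `x` with lag `k`. -/
def chenW {G : DirGraph} {K' : Type} [Field K'] {x : G.BPath} {M : Type}
    [AddCommGroup M] [Module K' M] (b : Module.Basis (orbit x) K' M) (k : ℤ) : Submodule K' M :=
  Submodule.span K' (⇑b '' {p : orbit x | TailEqLag (p : G.BPath) x k})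

/-! ## The module `K L_x` -/

/-- The set `L_x` of pairs `(y, k)` with `y ∼_k x`. -/
def Lset (G : DirGraph) (x : G.BPath) : Set (G.BPath × ℤ) := {yk | TailEqLag yk.1 x yk.2}

/-- The underlying `K`-vector space of the module `K L_x`, with basis `L_x`. -/
abbrev KLCarrier (G : DirGraph) (K : Type) [Field K] (x : G.BPath) : Type := (Lset G x) →₀ K

/-- Specification of the `L_K(E)`-module structure on `K L_x`, given by
`(μ ν^*) ⬝ (y, k) = (μ p, |μ| - |ν| + k)` when `y = ν p`, and `0` otherwise. The module
structure is encoded as a `K`-algebra homomorphism `ρ` to the endomorphism algebra. -/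
def KLSpec (G : DirGraph) (K : Type) [Field K] (x : G.BPath)
    (ρ : LPA G K →ₐ[K] Module.End K (KLCarrier G K x)) : Prop :=
  (∀ (μ ν : G.FinPath), μ.rng = ν.rng → ∀ (yk zk : Lset G x) (p : G.BPath),
      IsCat ν p (yk : G.BPath × ℤ).1 → IsCat μ p (zk : G.BPath × ℤ).1 →
      (zk : G.BPath × ℤ).2 = (yk : G.BPath × ℤ).2 + (μ.length : ℤ) - (ν.length : ℤ) →
      ρ (pathElem G K μ * pathStarElem G K ν) (Finsupp.single yk 1) = Finsupp.single zk 1) ∧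
  (∀ (μ ν : G.FinPath), μ.rng = ν.rng → ∀ yk : Lset G x,
      (¬ ∃ p : G.BPath, IsCat ν p (yk : G.BPath × ℤ).1) →
      ρ (pathElem G K μ * pathStarElem G K ν) (Finsupp.single yk 1) = 0)

/-- The canonical grading of `K L_x`: `(y, k)` is homogeneous of degree `k`. -/
noncomputable def KLgr (G : DirGraph) (K : Type) [Field K] (x : G.BPath) (k : ℤ) :
    Submodule K (KLCarrier G K x) :=
  Submodule.span K {m | ∃ yk : Lset G x, (yk : G.BPath × ℤ).2 = k ∧ m = Finsupp.single yk 1}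

end DirGraph

open DirGraph

/-!
Write `x = ν₁ p₁ = ν₂ p₂` with `|ν₁| ≤ |ν₂|`; then `ν₂ = ν₁ σ` and `p₁ = σ p₂`, so
`y = μ₁ σ p₂ = μ₂ p₂`. Two decompositions `y = α p₂ = β p₂` differ by a path `τ` with
`p₂ = τ p₂`; a nonempty such `τ` would give `p₂ = τ^∞`, and `x ∼ p₂` would be rational.
Hence `μ₂ = μ₁ σ`, and `σ` cancels from both `a_{μ₂} a_{ν₂}⁻¹` and `|μ₂| - |ν₂|`.
-/

theorem List.exists_eq_append_of_append_eq_append {α : Type*} {l₁ l₂ m₁ m₂ : List α}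
    (h : l₁ ++ m₁ = l₂ ++ m₂) (hle : l₁.length ≤ l₂.length) :
    ∃ t, l₂ = l₁ ++ t ∧ m₁ = t ++ m₂ := by
  rcases List.append_eq_append_iff.mp h with ⟨t, hl, hm⟩ | ⟨t, hl, hm⟩
  · exact ⟨t, hl, hm⟩
  · have ht : t = [] := List.eq_nil_of_length_eq_zero (by grind)
    exact ⟨[], by simp [hl, ht], by simp [hm, ht]⟩

theorem List.forall_get_eq_iff_eq_map_range {α : Type*} {l : List α} {f : ℕ → α} :
    (∀ i (h : i < l.length), f i = l.get ⟨i, h⟩) ↔ l = (List.range l.length).map f := by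
  constructor
  · intro h
    exact List.ext_getElem (by simp) fun i hi _ => by simpa using (h i hi).symm
  · intro h i hi
    simpa using (List.getElem_of_eq h hi).symm

namespace DirGraph

variable {G : DirGraph}

namespace FinPath

theorem rng_of_edges_eq_nil {μ : G.FinPath} (h : μ.edges = []) : μ.rng = μ.src := by
  simp [rng, h]

theorem rng_of_getLast?_eq {μ : G.FinPath} {e : G.E} (h : μ.edges.getLast? = some e) :
    μ.rng = G.r e := by
  simp [rng, h]

theorem rng_eq_of_edges_eq_append {μ ν σ : G.FinPath} (h : μ.edges = ν.edges ++ σ.edges)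
    (hσ : σ.src = ν.rng) (hμ : μ.src = ν.src) : μ.rng = σ.rng := by
  rcases hl : σ.edges.getLast? with _ | e
  · have hnil := List.getLast?_eq_none_iff.mp hl
    rw [rng_of_edges_eq_nil hnil, hσ]
    simp [rng, h, hμ, hnil]
  · rw [rng_of_getLast?_eq hl, rng_of_getLast?_eq (by rw [h, List.getLast?_append, hl]; rfl)]

def append (μ σ : G.FinPath) (h : μ.rng = σ.src) : G.FinPath where
  src := μ.src
  edges := μ.edges ++ σ.edges
  src_eq e he := by
    rcases hμ : μ.edges with _ | ⟨f, l⟩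
    · rw [hμ, List.nil_append] at he
      rw [σ.src_eq e he, ← h, rng_of_edges_eq_nil hμ]
    · rw [hμ, List.cons_append, List.head?_cons, Option.mem_some_iff] at he
      exact he ▸ μ.src_eq f (by simp [hμ])
  chain := μ.chain.append σ.chain fun e he f hf => by
    rw [σ.src_eq f hf, ← h, rng_of_getLast?_eq (Option.mem_def.mp he)]

theorem rng_append (μ σ : G.FinPath) (h : μ.rng = σ.src) : (μ.append σ h).rng = σ.rng :=
  rng_eq_of_edges_eq_append rfl h.symm rfl

def ofPrefix (μ : G.FinPath) (t : List G.E) (ht : t <+: μ.edges) : G.FinPath where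
  src := μ.src
  edges := t
  src_eq e he := by
    obtain ⟨l, hl⟩ := ht
    cases t with
    | nil => simp at he
    | cons f t => exact μ.src_eq e (by simpa [← hl] using he)
  chain := μ.chain.prefix ht

end FinPath

def InfPath.take (q : G.InfPath) (k : ℕ) : G.FinPath where
  src := q.src
  edges := (List.range k).map q.edges
  src_eq e he := by
    cases k with
    | zero => simp at he
    | succ k =>
      simp only [List.range_succ_eq_map, List.map_cons, List.head?_cons, Option.mem_some_iff] at he
      exact he ▸ rfl
  chain := (List.isChain_map q.edges).mpr <| (List.isChain_range _ k).mpr fun m _ => q.chain m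

theorem InfPath.rng_take (q : G.InfPath) (k : ℕ) : (q.take k).rng = G.s (q.edges k) := by
  cases k with
  | zero => rfl
  | succ k =>
    rw [FinPath.rng_of_getLast?_eq (e := q.edges k) (by simp [InfPath.take, List.range_succ])]
    exact q.chain k

theorem isCat_vertexPath (p : G.BPath) : IsCat (vertexPath G p.src) p p := by
  rcases p with ⟨q | q, _⟩
  · exact ⟨rfl, rfl, rfl⟩
  · exact ⟨rfl, fun i h => absurd h (Nat.not_lt_zero i), fun i => congrArg q.edges (Nat.zero_add i)⟩

theorem IsCat.tailEq {ν : G.FinPath} {p x : G.BPath} (h : IsCat ν p x) : TailEq x p :=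
  ⟨ν.length, ν, vertexPath G p.src, p, h, isCat_vertexPath p, by simp [vertexPath, FinPath.length]⟩

theorem IsCat.append {μ σ : G.FinPath} {p q y : G.BPath} (h₁ : IsCat μ p y) (h₂ : IsCat σ q p)
    (h : μ.rng = σ.src) : IsCat (μ.append σ h) q y := by
  refine ⟨(FinPath.rng_append μ σ h).trans h₂.1, ?_⟩
  obtain ⟨-, h₁⟩ := h₁
  obtain ⟨-, h₂⟩ := h₂
  rcases y with ⟨w | w, _⟩ <;> rcases p with ⟨u | u, _⟩ <;> rcases q with ⟨t | t, _⟩ <;>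
    first | exact h₁.elim | exact h₂.elim | skip
  · exact ⟨h₁.1, by rw [h₁.2, h₂.2]; exact (List.append_assoc _ _ _).symm⟩
  · obtain ⟨hμ, hu⟩ := h₁
    obtain ⟨hσ, ht⟩ := h₂
    refine ⟨List.forall_get_eq_iff_eq_map_range.mpr ?_, fun i => ?_⟩
    · rw [List.forall_get_eq_iff_eq_map_range] at hμ hσ
      show μ.edges ++ σ.edges = (List.range (μ.edges ++ σ.edges).length).map w.edges
      rw [List.length_append, List.range_add, List.map_append, List.map_map, ← hμ, hσ]
      simp [Function.comp_def, hu]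
    · show w.edges ((μ.edges ++ σ.edges).length + i) = t.edges i
      rw [List.length_append, Nat.add_assoc, hu, ht]

theorem IsCat.exists_isCat_of_length_le {ν₁ ν₂ : G.FinPath} {p₁ p₂ x : G.BPath}
    (h₁ : IsCat ν₁ p₁ x) (h₂ : IsCat ν₂ p₂ x) (hle : ν₁.length ≤ ν₂.length) :
    ∃ σ : G.FinPath, σ.src = p₁.src ∧ IsCat σ p₂ p₁ ∧ ν₂.edges = ν₁.edges ++ σ.edges := by
  obtain ⟨hr₁, h₁⟩ := h₁
  obtain ⟨hr₂, h₂⟩ := h₂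
  rcases x with ⟨ξ | ξ, _⟩ <;> rcases p₁ with ⟨q₁ | q₁, _⟩ <;> rcases p₂ with ⟨q₂ | q₂, _⟩ <;>
    first | exact h₁.elim | exact h₂.elim | skip
  · obtain ⟨t, hν, hq⟩ := List.exists_eq_append_of_append_eq_append (h₁.2.symm.trans h₂.2) hle
    let σ := q₁.ofPrefix t ⟨q₂.edges, hq.symm⟩
    have hrng : ν₂.rng = σ.rng :=
      FinPath.rng_eq_of_edges_eq_append hν hr₁.symm (h₂.1.symm.trans h₁.1)
    exact ⟨σ, rfl, ⟨hrng ▸ hr₂, rfl, hq⟩, hν⟩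
  · obtain ⟨hν₁, hq₁⟩ := h₁
    obtain ⟨hν₂, hq₂⟩ := h₂
    rw [List.forall_get_eq_iff_eq_map_range] at hν₁ hν₂
    obtain ⟨k, hk⟩ := Nat.exists_eq_add_of_le hle
    have hlen : (q₁.take k).edges.length = k := by simp [InfPath.take]
    refine ⟨q₁.take k, rfl, ⟨?_, ?_, fun i => ?_⟩, ?_⟩
    · show (q₁.take k).rng = q₂.src
      rw [InfPath.rng_take, ← hq₁, ← Nat.add_zero (_ + k)]
      exact congrArg G.s ((congrArg ξ.edges (congrArg (· + 0) hk.symm)).trans (hq₂ 0))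
    · rw [List.forall_get_eq_iff_eq_map_range, hlen]
      rfl
    · rw [hlen, ← hq₁, ← hq₂, ← Nat.add_assoc]
      exact congrArg ξ.edges (congrArg (· + i) hk.symm)
    · rw [hν₂, hν₁, show ν₂.edges.length = ν₁.edges.length + k from hk, List.range_add,
        List.map_append, List.map_map]
      simp [Function.comp_def, hq₁, InfPath.take]

theorem IsCat.edges_eq_of_not_isRational {μ μ' : G.FinPath} {p x y : G.BPath}
    (hx : ¬ IsRational x) (hxp : TailEq x p) (h : IsCat μ p y) (h' : IsCat μ' p y) :
    μ.edges = μ'.edges := by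
  have hnil : ∀ {τ : G.FinPath}, IsCat τ p p → τ.edges = [] := fun hτ =>
    List.eq_nil_of_length_eq_zero <| by
      by_contra hne
      exact hx ⟨_, p, Nat.pos_of_ne_zero hne, hτ, hxp⟩
  rcases le_total μ.length μ'.length with hle | hle
  · obtain ⟨τ, -, hτ, he⟩ := h.exists_isCat_of_length_le h' hle
    rw [he, hnil hτ, List.append_nil]
  · obtain ⟨τ, -, hτ, he⟩ := h'.exists_isCat_of_length_le h hle
    rw [he, hnil hτ, List.append_nil]

theorem exists_edges_eq_append_of_not_isRational {μ₁ μ₂ ν₁ ν₂ : G.FinPath} {p₁ p₂ x y : G.BPath}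
    (hx : ¬ IsRational x) (h₁ : IsCat μ₁ p₁ y) (h₂ : IsCat μ₂ p₂ y)
    (h₃ : IsCat ν₁ p₁ x) (h₄ : IsCat ν₂ p₂ x) (hle : ν₁.length ≤ ν₂.length) :
    ∃ σ : G.FinPath, μ₂.edges = μ₁.edges ++ σ.edges ∧ ν₂.edges = ν₁.edges ++ σ.edges := by
  obtain ⟨σ, hσ, hσp, hν⟩ := h₃.exists_isCat_of_length_le h₄ hle
  have hcat : IsCat (μ₁.append σ (h₁.1.trans hσ.symm)) p₂ y := h₁.append hσp _
  exact ⟨σ, h₂.edges_eq_of_not_isRational hx h₄.tailEq hcat, hν⟩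

section aval

variable {K : Type} [Field K] {a : G.E → K}

theorem aval_ne_zero (ha : ∀ e, a e ≠ 0) (μ : G.FinPath) : aval a μ ≠ 0 :=
  List.prod_ne_zero fun h => by
    obtain ⟨e, -, he⟩ := List.mem_map.mp h
    exact ha e he

theorem aval_of_edges_eq_append {μ ν σ : G.FinPath} (h : μ.edges = ν.edges ++ σ.edges) :
    aval a μ = aval a ν * aval a σ := by
  rw [aval, h, List.map_append, List.prod_append, aval, aval]

theorem aval_mul_inv_eq_of_edges_eq_append (ha : ∀ e, a e ≠ 0) {μ₁ μ₂ ν₁ ν₂ σ : G.FinPath}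
    (hμ : μ₂.edges = μ₁.edges ++ σ.edges) (hν : ν₂.edges = ν₁.edges ++ σ.edges) :
    aval a μ₁ * (aval a ν₁)⁻¹ = aval a μ₂ * (aval a ν₂)⁻¹ := by
  rw [aval_of_edges_eq_append hμ, aval_of_edges_eq_append hν, mul_inv, mul_mul_mul_comm,
    mul_inv_cancel₀ (aval_ne_zero ha σ), mul_one]

end aval

theorem length_sub_eq_of_edges_eq_append {μ₁ μ₂ ν₁ ν₂ σ : G.FinPath}
    (hμ : μ₂.edges = μ₁.edges ++ σ.edges) (hν : ν₂.edges = ν₁.edges ++ σ.edges) :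
    (μ₁.length : ℤ) - ν₁.length = (μ₂.length : ℤ) - ν₂.length := by
  simp only [FinPath.length, hμ, hν, List.length_append]
  omega

end DirGraph

theorem stmt_0_general (G : DirGraph) (K : Type) [Field K] (a : G.E → K) (ha : ∀ e, a e ≠ 0)
    (x y : G.BPath) (hx : ¬ IsRational x)
    (μ₁ μ₂ ν₁ ν₂ : G.FinPath) (p₁ p₂ : G.BPath)
    (h₁ : IsCat μ₁ p₁ y) (h₂ : IsCat μ₂ p₂ y)
    (h₃ : IsCat ν₁ p₁ x) (h₄ : IsCat ν₂ p₂ x) :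
    aval a μ₁ * (aval a ν₁)⁻¹ = aval a μ₂ * (aval a ν₂)⁻¹ ∧
      (μ₁.length : ℤ) - (ν₁.length : ℤ) = (μ₂.length : ℤ) - (ν₂.length : ℤ) := by
  rcases le_total ν₁.length ν₂.length with hle | hle
  · obtain ⟨σ, hμ, hν⟩ := exists_edges_eq_append_of_not_isRational hx h₁ h₂ h₃ h₄ hle
    exact ⟨aval_mul_inv_eq_of_edges_eq_append ha hμ hν, length_sub_eq_of_edges_eq_append hμ hν⟩
  · obtain ⟨σ, hμ, hν⟩ := exists_edges_eq_append_of_not_isRational hx h₂ h₁ h₄ h₃ hle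
    exact ⟨(aval_mul_inv_eq_of_edges_eq_append ha hμ hν).symm,
      (length_sub_eq_of_edges_eq_append hμ hν).symm⟩

/-- well-definedness of the lag and of the twisting scalar:
if `x ∈ ∂E` is not rational, `y` is tail-equivalent to `x`, and
`y = μ₁ p₁ = μ₂ p₂`, `x = ν₁ p₁ = ν₂ p₂`, then
`a_{μ₁} a_{ν₁}⁻¹ = a_{μ₂} a_{ν₂}⁻¹` and `|μ₁| - |ν₁| = |μ₂| - |ν₂|`. -/
theorem stmt_0 (G : DirGraph) (K : Type) [Field K] (a : G.E → K) (ha : ∀ e, a e ≠ 0)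
    (x y : G.BPath) (hx : ¬ IsRational x) (hxy : TailEq y x)
    (μ₁ μ₂ ν₁ ν₂ : G.FinPath) (p₁ p₂ : G.BPath)
    (h₁ : IsCat μ₁ p₁ y) (h₂ : IsCat μ₂ p₂ y)
    (h₃ : IsCat ν₁ p₁ x) (h₄ : IsCat ν₂ p₂ x) :
    aval a μ₁ * (aval a ν₁)⁻¹ = aval a μ₂ * (aval a ν₂)⁻¹ ∧
      (μ₁.length : ℤ) - (ν₁.length : ℤ) = (μ₂.length : ℤ) - (ν₂.length : ℤ) :=
  stmt_0_general G K a ha x y hx μ₁ μ₂ ν₁ ν₂ p₁ p₂ h₁ h₂ h₃ h₄
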